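/- Taking the DFT along the third dimension converts the t-product into slice-wise matrix multiplication: if C = A * B is the t-product of A (n1×n2×n3) and B (n2×n4×n3), then for each frequency index ω ∈ ZMod n3, the ω-th frontal slice of the mode-3 DFT of C equals the matrix product of the ω-th frontal slices of the mode-3 DFTs of A and B. -/

import Mathlib

open Finset Complex
open scoped ComplexOrder

/-- The root `ζ = exp(-2πi/n)` used in the mode-3 DFT. -/
noncomputable def dftRoot (n : ℕ) : ℂ := Complex.exp (-2 * Real.pi * Complex.I / n)

/-- Mode-3 DFT of a third-order tensor: `Â(i,j,ω) = ∑ k, A(i,j,k) ζ^{ωk}`. -/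
noncomputable def dft3 {n1 n2 n3 : ℕ} [NeZero n3]
    (A : Fin n1 → Fin n2 → ZMod n3 → ℂ) (i : Fin n1) (j : Fin n2) (w : ZMod n3) : ℂ :=
  ∑ k : ZMod n3, A i j k * dftRoot n3 ^ (w * k).val

/-- t-product of third-order complex tensors via circular convolution of tubes. -/
noncomputable def tProdC {n1 n2 n4 n3 : ℕ} [NeZero n3]
    (A : Fin n1 → Fin n2 → ZMod n3 → ℂ) (B : Fin n2 → Fin n4 → ZMod n3 → ℂ) :
    Fin n1 → Fin n4 → ZMod n3 → ℂ :=
  fun i j t => ∑ k : Fin n2, ∑ s : ZMod n3, A i k s * B k j (t - s)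

/-- Conjugate tensor transpose: `Aᵀ'(i,j,k) = conj (A(j,i,-k))`. -/
noncomputable def ctT {n1 n2 n3 : ℕ} (A : Fin n1 → Fin n2 → ZMod n3 → ℂ) :
    Fin n2 → Fin n1 → ZMod n3 → ℂ :=
  fun i j k => starRingEnd ℂ (A j i (-k))

/-- The identity tensor: `I(i,i,0) = 1` and zero elsewhere. -/
noncomputable def idTC (n n3 : ℕ) : Fin n → Fin n → ZMod n3 → ℂ :=
  fun i j k => if i = j ∧ k = 0 then 1 else 0

/-- A tensor `Q` is orthogonal if `Qᵀ' * Q = Q * Qᵀ' = I` in the t-product sense. -/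
noncomputable def IsOrthT {n n3 : ℕ} [NeZero n3] (Q : Fin n → Fin n → ZMod n3 → ℂ) : Prop :=
  tProdC (ctT Q) Q = idTC n n3 ∧ tProdC Q (ctT Q) = idTC n n3

/-- The `ω`-th frontal slice of the mode-3 DFT of a tensor. -/
noncomputable def sliceDFT {n1 n2 n3 : ℕ} [NeZero n3]
    (A : Fin n1 → Fin n2 → ZMod n3 → ℂ) (w : ZMod n3) : Matrix (Fin n1) (Fin n2) ℂ :=
  Matrix.of fun i j => dft3 A i j w

/-- Squared Frobenius norm of a third-order tensor. -/
noncomputable def frob2 {n1 n2 n3 : ℕ} [NeZero n3]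
    (A : Fin n1 → Fin n2 → ZMod n3 → ℂ) : ℝ :=
  ∑ i : Fin n1, ∑ j : Fin n2, ∑ k : ZMod n3, ‖A i j k‖ ^ 2

/-- Nuclear norm of a matrix: sum of singular values, i.e. `Re (trace √(Mᴴ M))`. -/
noncomputable def nuclearNorm {m n : Type*} [Fintype m] [Fintype n] [DecidableEq n]
    (M : Matrix m n ℂ) : ℝ :=
  ((Matrix.posSemidef_conjTranspose_mul_self M).1.eigenvectorUnitary.1 *
    Matrix.diagonal (((↑) : ℝ → ℂ) ∘ Real.sqrt ∘ (Matrix.posSemidef_conjTranspose_mul_self M).1.eigenvalues) *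
    (star (Matrix.posSemidef_conjTranspose_mul_self M).1.eigenvectorUnitary : Matrix n n ℂ)).trace.re

/-!
The kernel `k ↦ ζ^{ωk}` of the DFT at frequency `ω` is an additive character of `ZMod n3`, and
pairing with an additive character turns circular convolution into multiplication. Entrywise,
the t-product is a sum over the inner index of circular convolutions of tubes.
-/

theorem sum_conv_mul_addChar {G R : Type*} [AddCommGroup G] [Fintype G] [CommSemiring R]
    (ψ : AddChar G R) (f g : G → R) :
    ∑ t, (∑ s, f s * g (t - s)) * ψ t = (∑ s, f s * ψ s) * ∑ u, g u * ψ u := by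
  simp_rw [sum_mul, mul_sum]
  rw [sum_comm]
  refine sum_congr rfl fun s _ => ?_
  refine Fintype.sum_equiv (Equiv.subRight s) _ _ fun t => ?_
  have hψ : ψ t = ψ s * ψ (t - s) := by rw [← AddChar.map_add_eq_mul, add_sub_cancel]
  simp only [Equiv.subRight_apply, hψ]
  ring

lemma dftRoot_pow_self (n : ℕ) : dftRoot n ^ n = 1 := by
  rw [dftRoot, ← Complex.exp_nat_mul, ← Complex.exp_zero]
  rcases eq_or_ne n 0 with rfl | hn
  · simp
  · have : (n : ℂ) * (-2 * Real.pi * I / n) = -(2 * Real.pi * I) := by field_simp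
    rw [this, Complex.exp_neg, Complex.exp_two_pi_mul_I, inv_one, Complex.exp_zero]

noncomputable def dftChar (n : ℕ) [NeZero n] (w : ZMod n) : AddChar (ZMod n) ℂ :=
  (AddChar.zmodChar n (dftRoot_pow_self n)).mulShift w

lemma dft3_eq_sum_dftChar {n1 n2 n3 : ℕ} [NeZero n3] (A : Fin n1 → Fin n2 → ZMod n3 → ℂ)
    (i : Fin n1) (j : Fin n2) (w : ZMod n3) :
    dft3 A i j w = ∑ k, A i j k * dftChar n3 w k :=
  rfl

/-- The mode-3 DFT converts the t-product into slice-wise matrix multiplication. -/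
theorem sliceDFT_tProdC {n1 n2 n4 n3 : ℕ} [NeZero n3]
    (A : Fin n1 → Fin n2 → ZMod n3 → ℂ) (B : Fin n2 → Fin n4 → ZMod n3 → ℂ)
    (w : ZMod n3) :
    sliceDFT (tProdC A B) w = sliceDFT A w * sliceDFT B w := by
  ext i j
  simp only [sliceDFT, Matrix.mul_apply, Matrix.of_apply, dft3_eq_sum_dftChar, tProdC]
  simp only [← sum_conv_mul_addChar (dftChar n3 w), sum_mul (s := univ (α := Fin n2))]
  exact sum_comm
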